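/- arXiv:2507.11696 — 2 statements merged into one kernel-verified Lean document; each statement's English description precedes it below -/
import Mathlib

section
/- For every integer k and all real a, ε, the matrix P·Z^(−(2k+1)) commutes with the Harper matrix at b = (2k+1)π/N: (P·Z^(−(2k+1))) · h(a, (2k+1)π/N, ε) = h(a, (2k+1)π/N, ε) · (P·Z^(−(2k+1))). -/
open Matrix Complex

/-- The primitive `N`-th root of unity `ω = exp(2πi/N)`. -/
noncomputable def omegaN (N : ℕ) : ℂ := Complex.exp (2 * (Real.pi : ℂ) * Complex.I / (N : ℂ))

/-- The clock matrix `Z` with `Z_{jk} = ω^j` if `j = k`, `0` otherwise. -/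
noncomputable def clockZ (N : ℕ) : Matrix (Fin N) (Fin N) ℂ :=
  Matrix.diagonal fun j => omegaN N ^ (j : ℕ)

/-- The shift matrix `X` with `X_{jk} = 1` if `j = k + 1 (mod N)`, `0` otherwise. -/
def shiftX (N : ℕ) : Matrix (Fin N) (Fin N) ℂ :=
  Matrix.of fun j k => if (j : ℕ) = ((k : ℕ) + 1) % N then 1 else 0

/-- The shifted Harper matrix
`h(a,b,ε) = (a/2)·e^{ib}·X + (a/2)·e^{−ib}·Xᴴ + (ε/2)·(Z + Zᴴ)`. -/
noncomputable def harper (N : ℕ) (a b ε : ℝ) : Matrix (Fin N) (Fin N) ℂ :=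
  ((a : ℂ) / 2 * Complex.exp ((b : ℂ) * Complex.I)) • shiftX N
  + ((a : ℂ) / 2 * Complex.exp (-(b : ℂ) * Complex.I)) • (shiftX N)ᴴ
  + ((ε : ℂ) / 2) • (clockZ N + (clockZ N)ᴴ)

/-- The parity matrix `P` with `P_{jk} = 1` if `j + k ≡ 0 (mod N)`, `0` otherwise. -/
def parityP (N : ℕ) : Matrix (Fin N) (Fin N) ℂ :=
  Matrix.of fun j k => if ((j : ℕ) + (k : ℕ)) % N = 0 then 1 else 0

/-- The discrete Fourier transform matrix `Q` with `Q_{jk} = ω^{jk}/√N`. -/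
noncomputable def dftQ (N : ℕ) : Matrix (Fin N) (Fin N) ℂ :=
  Matrix.of fun j k => omegaN N ^ ((j : ℕ) * (k : ℕ)) / (Real.sqrt N : ℂ)

/-!
Write `M = P·Z^n` with `n = −(2k+1)`. The matrices `P` and `X` are the permutation matrices
of `j ↦ −j` and `j ↦ j + 1`, and `j ↦ ω^j` is a character of `ℤ/N`; hence
`M·X = ω^n·Xᴴ·M`, `M·Xᴴ = ω^(−n)·X·M`, `M·Z = Zᴴ·M` and `M·Zᴴ = Z·M`. Since
`ω^n = e^(−2ib)` for `b = (2k+1)π/N`, conjugation by `M` exchanges the two hopping terms of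
`h(a,b,ε)` and fixes its potential.
-/

theorem Matrix.diagonal_zpow {n K : Type*} [Fintype n] [DecidableEq n] [Field K] {d : n → K}
    (hd : ∀ i, d i ≠ 0) (m : ℤ) : diagonal d ^ m = diagonal (d ^ m) := by
  cases m with
  | ofNat k => simp only [Int.ofNat_eq_natCast, zpow_natCast, diagonal_pow]
  | negSucc k =>
    rw [zpow_negSucc, zpow_negSucc, diagonal_pow]
    refine inv_eq_left_inv ?_
    rw [diagonal_mul_diagonal, ← diagonal_one]
    congr 1
    ext i
    simp [hd]

theorem Equiv.Perm.permMatrix_mul_diagonal {n R : Type*} [Fintype n] [DecidableEq n] [Semiring R]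
    (σ : Equiv.Perm n) (d : n → R) :
    σ.permMatrix R * diagonal d = diagonal (d ∘ σ) * σ.permMatrix R := by
  rw [PEquiv.toMatrix_toPEquiv_mul, PEquiv.mul_toMatrix_toPEquiv]
  ext i j
  simp [diagonal_apply, Equiv.eq_symm_apply]

theorem Equiv.Perm.diagonal_mul_permMatrix {n R : Type*} [Fintype n] [DecidableEq n] [Semiring R]
    (σ : Equiv.Perm n) (d : n → R) :
    diagonal d * σ.permMatrix R = σ.permMatrix R * diagonal (d ∘ σ.symm) := by
  rw [σ.permMatrix_mul_diagonal, Function.comp_assoc, σ.symm_comp_self, Function.comp_id]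

theorem clockZ_zpow (N : ℕ) (n : ℤ) :
    clockZ N ^ n = diagonal fun j : Fin N => (omegaN N ^ (j : ℕ)) ^ n :=
  diagonal_zpow (fun _ => pow_ne_zero _ (Complex.exp_ne_zero _)) n

section

variable {N : ℕ} [NeZero N]

theorem isPrimitiveRoot_omegaN : IsPrimitiveRoot (omegaN N) N :=
  Complex.isPrimitiveRoot_exp N (NeZero.ne N)

theorem omegaN_pow_mod (n : ℕ) : omegaN N ^ (n % N) = omegaN N ^ n :=
  pow_eq_pow_of_modEq (Nat.mod_modEq n N) isPrimitiveRoot_omegaN.pow_eq_one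

theorem omegaN_pow_val_add (i j : Fin N) :
    omegaN N ^ ((i + j : Fin N) : ℕ) = omegaN N ^ (i : ℕ) * omegaN N ^ (j : ℕ) := by
  rw [Fin.val_add, omegaN_pow_mod, pow_add]

theorem omegaN_pow_val_one : omegaN N ^ ((1 : Fin N) : ℕ) = omegaN N := by
  rw [Fin.val_one', omegaN_pow_mod, pow_one]

theorem omegaN_pow_val_neg (j : Fin N) :
    omegaN N ^ ((-j : Fin N) : ℕ) = (omegaN N ^ (j : ℕ))⁻¹ := by
  refine eq_inv_of_mul_eq_one_left ?_
  rw [← omegaN_pow_val_add, neg_add_cancel, Fin.val_zero, pow_zero]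

theorem omegaN_pow_val_add_one (j : Fin N) :
    omegaN N ^ ((j + 1 : Fin N) : ℕ) = omegaN N * omegaN N ^ (j : ℕ) := by
  rw [omegaN_pow_val_add, omegaN_pow_val_one, mul_comm]

theorem omegaN_pow_val_sub_one (j : Fin N) :
    omegaN N ^ ((j - 1 : Fin N) : ℕ) = (omegaN N)⁻¹ * omegaN N ^ (j : ℕ) := by
  rw [sub_eq_add_neg, omegaN_pow_val_add, omegaN_pow_val_neg, omegaN_pow_val_one, mul_comm]

theorem star_omegaN_pow (j : ℕ) : star (omegaN N ^ j) = (omegaN N ^ j)⁻¹ := by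
  have h : ‖omegaN N ^ j‖ = 1 := by
    rw [norm_pow, (isPrimitiveRoot_omegaN (N := N)).norm'_eq_one (NeZero.ne N), one_pow]
  rw [Complex.inv_def, Complex.normSq_eq_norm_sq, h]
  simp

theorem conjTranspose_clockZ :
    (clockZ N)ᴴ = diagonal fun j => omegaN N ^ ((-j : Fin N) : ℕ) := by
  simp only [clockZ, diagonal_conjTranspose, omegaN_pow_val_neg]
  congr 1
  ext j
  exact star_omegaN_pow _

theorem parityP_eq_permMatrix : parityP N = (Equiv.neg (Fin N)).permMatrix ℂ := by
  ext j l
  simp only [parityP, of_apply, PEquiv.toMatrix_apply, Equiv.toPEquiv_apply, Option.mem_def,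
    Option.some.injEq, Equiv.neg_apply, neg_eq_iff_add_eq_zero, Fin.ext_iff, Fin.val_add,
    Fin.val_zero]

theorem shiftX_eq_permMatrix :
    shiftX N = Equiv.Perm.permMatrix ℂ (Equiv.subRight (1 : Fin N)) := by
  ext j l
  simp only [shiftX, of_apply, PEquiv.toMatrix_apply, Equiv.toPEquiv_apply, Option.mem_def,
    Option.some.injEq, Equiv.subRight_apply, sub_eq_iff_eq_add, Fin.ext_iff, Fin.val_add,
    Fin.val_one', Nat.add_mod_mod]

theorem parityP_mul_shiftX : parityP N * shiftX N = (shiftX N)ᴴ * parityP N := by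
  simp only [parityP_eq_permMatrix, shiftX_eq_permMatrix, conjTranspose_permMatrix,
    ← permMatrix_mul]
  congr 1
  ext j : 1
  simp only [Equiv.Perm.coe_mul, Function.comp_apply, Equiv.neg_apply, Equiv.subRight_apply,
    Equiv.Perm.inv_def, Equiv.subRight_symm_apply]
  abel

theorem parityP_mul_conjTranspose_shiftX : parityP N * (shiftX N)ᴴ = shiftX N * parityP N := by
  simp only [parityP_eq_permMatrix, shiftX_eq_permMatrix, conjTranspose_permMatrix,
    ← permMatrix_mul]
  congr 1
  ext j : 1
  simp only [Equiv.Perm.coe_mul, Function.comp_apply, Equiv.neg_apply, Equiv.subRight_apply,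
    Equiv.Perm.inv_def, Equiv.subRight_symm_apply]
  abel

theorem parityP_mul_diagonal (d : Fin N → ℂ) :
    parityP N * diagonal d = diagonal (fun j => d (-j)) * parityP N := by
  rw [parityP_eq_permMatrix, Equiv.Perm.permMatrix_mul_diagonal]
  rfl

theorem diagonal_mul_shiftX (d : Fin N → ℂ) :
    diagonal d * shiftX N = shiftX N * diagonal (fun j => d (j + 1)) := by
  rw [shiftX_eq_permMatrix, Equiv.Perm.diagonal_mul_permMatrix]
  rfl

theorem diagonal_mul_conjTranspose_shiftX (d : Fin N → ℂ) :
    diagonal d * (shiftX N)ᴴ = (shiftX N)ᴴ * diagonal (fun j => d (j - 1)) := by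
  rw [shiftX_eq_permMatrix, conjTranspose_permMatrix, Equiv.Perm.diagonal_mul_permMatrix]
  rfl

theorem parityP_mul_clockZ : parityP N * clockZ N = (clockZ N)ᴴ * parityP N := by
  rw [clockZ, parityP_mul_diagonal, ← clockZ, conjTranspose_clockZ]

theorem parityP_mul_conjTranspose_clockZ : parityP N * (clockZ N)ᴴ = clockZ N * parityP N := by
  simp only [conjTranspose_clockZ, parityP_mul_diagonal, neg_neg]
  rfl

theorem parityP_mul_clockZ_zpow_mul_shiftX (n : ℤ) :
    parityP N * clockZ N ^ n * shiftX N
      = omegaN N ^ n • ((shiftX N)ᴴ * (parityP N * clockZ N ^ n)) := by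
  have hshift : (fun j : Fin N => (omegaN N ^ ((j + 1 : Fin N) : ℕ)) ^ n)
      = omegaN N ^ n • fun j : Fin N => (omegaN N ^ (j : ℕ)) ^ n := by
    ext j
    rw [omegaN_pow_val_add_one, mul_zpow, Pi.smul_apply, smul_eq_mul]
  rw [clockZ_zpow, Matrix.mul_assoc, diagonal_mul_shiftX, ← Matrix.mul_assoc, parityP_mul_shiftX,
    hshift, diagonal_smul, Matrix.mul_smul, Matrix.mul_assoc]

theorem parityP_mul_clockZ_zpow_mul_conjTranspose_shiftX (n : ℤ) :
    parityP N * clockZ N ^ n * (shiftX N)ᴴ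
      = omegaN N ^ (-n) • (shiftX N * (parityP N * clockZ N ^ n)) := by
  have hshift : (fun j : Fin N => (omegaN N ^ ((j - 1 : Fin N) : ℕ)) ^ n)
      = omegaN N ^ (-n) • fun j : Fin N => (omegaN N ^ (j : ℕ)) ^ n := by
    ext j
    rw [omegaN_pow_val_sub_one, mul_zpow, _root_.inv_zpow, ← _root_.zpow_neg, Pi.smul_apply,
      smul_eq_mul]
  rw [clockZ_zpow, Matrix.mul_assoc, diagonal_mul_conjTranspose_shiftX, ← Matrix.mul_assoc,
    parityP_mul_conjTranspose_shiftX, hshift, diagonal_smul, Matrix.mul_smul, Matrix.mul_assoc]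

theorem parityP_mul_clockZ_zpow_mul_clockZ (n : ℤ) :
    parityP N * clockZ N ^ n * clockZ N = (clockZ N)ᴴ * (parityP N * clockZ N ^ n) := by
  rw [Matrix.mul_assoc, ← (Matrix.Commute.self_zpow (clockZ N) n).eq, ← Matrix.mul_assoc,
    parityP_mul_clockZ, Matrix.mul_assoc]

theorem parityP_mul_clockZ_zpow_mul_conjTranspose_clockZ (n : ℤ) :
    parityP N * clockZ N ^ n * (clockZ N)ᴴ = clockZ N * (parityP N * clockZ N ^ n) := by
  have hcomm : Commute (clockZ N ^ n) (clockZ N)ᴴ := by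
    rw [clockZ_zpow, conjTranspose_clockZ]
    exact commute_diagonal _ _
  rw [Matrix.mul_assoc, hcomm.eq, ← Matrix.mul_assoc, parityP_mul_conjTranspose_clockZ,
    Matrix.mul_assoc]

theorem omegaN_zpow (n : ℤ) :
    omegaN N ^ n = Complex.exp (2 * ((n * Real.pi / N : ℝ) : ℂ) * Complex.I) := by
  have hN : (N : ℂ) ≠ 0 := Nat.cast_ne_zero.2 (NeZero.ne N)
  rw [omegaN, ← Complex.exp_int_mul]
  congr 1
  push_cast
  field_simp

end

theorem parity_clock_odd_commutes_harper_general (N : ℕ) (k : ℤ) (a ε : ℝ) :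
    (parityP N * (clockZ N) ^ (-(2 * k + 1))) * harper N a ((2 * (k : ℝ) + 1) * Real.pi / N) ε
      = harper N a ((2 * (k : ℝ) + 1) * Real.pi / N) ε
          * (parityP N * (clockZ N) ^ (-(2 * k + 1))) := by
  rcases N.eq_zero_or_pos with rfl | hN
  · exact Subsingleton.elim _ _
  have : NeZero N := ⟨hN.ne'⟩
  set b : ℝ := (2 * (k : ℝ) + 1) * Real.pi / N with hb
  have hX : Complex.exp (b * Complex.I) * omegaN N ^ (-(2 * k + 1))
      = Complex.exp (-b * Complex.I) := by
    rw [omegaN_zpow, ← Complex.exp_add, hb]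
    push_cast
    ring_nf
  have hXH : Complex.exp (-b * Complex.I) * omegaN N ^ (-(-(2 * k + 1)))
      = Complex.exp (b * Complex.I) := by
    rw [omegaN_zpow, ← Complex.exp_add, hb]
    push_cast
    ring_nf
  simp only [harper, Matrix.mul_add, Matrix.add_mul, Matrix.mul_smul, Matrix.smul_mul,
    parityP_mul_clockZ_zpow_mul_shiftX, parityP_mul_clockZ_zpow_mul_conjTranspose_shiftX,
    parityP_mul_clockZ_zpow_mul_clockZ, parityP_mul_clockZ_zpow_mul_conjTranspose_clockZ,
    smul_smul]
  rw [mul_assoc (a / 2 : ℂ), hX, mul_assoc (a / 2 : ℂ), hXH, add_comm ((clockZ N)ᴴ * _)]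
  exact congrArg (· + _) (add_comm _ _)

/-- The matrix `P·Z^(−(2k+1))` commutes with the Harper matrix at `b = (2k+1)π/N`. -/
theorem parity_clock_odd_commutes_harper (N : ℕ) (hN : 2 ≤ N) (k : ℤ) (a ε : ℝ) :
    (parityP N * (clockZ N) ^ (-(2 * k + 1))) * harper N a ((2 * (k : ℝ) + 1) * Real.pi / N) ε
      = harper N a ((2 * (k : ℝ) + 1) * Real.pi / N) ε
          * (parityP N * (clockZ N) ^ (-(2 * k + 1))) :=
  parity_clock_odd_commutes_harper_general N k a ε
end

section
/- The characteristic polynomial of twice the Harper matrix depends on the parameter b only through an additive term −2cos(Nb): for all complex x and all real b, ε, det(x·I − 2·h(1, b, ε)) = det(x·I − 2·h(1, 0, ε)) + 2 − 2·cos(N·b). -/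
open Matrix Complex

/-!
Conjugating `x - 2h(1, b, ε)` by the diagonal gauge `diag(e^{-ibj})` removes `b` from every
entry except the two corners of the cyclic shift, which acquire the factors `t = e^{iNb}` and
`t⁻¹`. The determinant is affine in each corner entry, and since the `b = 0` matrix is symmetric
and one cofactor of the periodic Jacobi matrix is computed by a triangular expansion, the
dependence on `t` collapses to `2 - t - t⁻¹ = 2 - 2cos(Nb)`.
-/

theorem Matrix.det_add_single {m R : Type*} [Fintype m] [DecidableEq m] [CommRing R]
    (M : Matrix m m R) (i j : m) (c : R) :
    (M + single i j c).det = M.det + c * adjugate M j i := by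
  have hrow : M + single i j c = M.updateRow i (M i + c • Pi.single j 1) := by
    ext a b
    by_cases h : a = i
    · subst h; simp [single_apply, Pi.single_apply, eq_comm]
    · simp [single_apply_of_row_ne (Ne.symm h), h]
  rw [hrow, det_updateRow_add, updateRow_eq_self, det_updateRow_smul, adjugate_apply]

theorem shiftX_apply {N : ℕ} [NeZero N] (j k : Fin N) :
    shiftX N j k = if j = k + 1 then 1 else 0 := by
  simp [shiftX, Fin.ext_iff, Fin.val_add]

theorem shiftX_conjTranspose (N : ℕ) : (shiftX N)ᴴ = (shiftX N)ᵀ := by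
  ext j k
  simp [shiftX, apply_ite]

noncomputable def periodicJacobi {N : ℕ} (d : Fin N → ℂ) (u v : ℂ) : Matrix (Fin N) (Fin N) ℂ :=
  diagonal d - u • shiftX N - v • (shiftX N)ᵀ

theorem periodicJacobi_transpose {N : ℕ} (d : Fin N → ℂ) (u v : ℂ) :
    (periodicJacobi d u v)ᵀ = periodicJacobi d v u := by
  simp only [periodicJacobi, transpose_sub, transpose_smul, diagonal_transpose,
    transpose_transpose]
  abel

section Gauge

variable {n : ℕ} {u v : ℂ}

theorem diagonal_pow_mul_smul_shiftX (huv : u * v = 1) :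
    diagonal (fun j : Fin (n + 1) => v ^ (j : ℕ)) * (u • shiftX (n + 1))
      = (shiftX (n + 1) - single (0 : Fin (n + 1)) (Fin.last n) (1 - u ^ (n + 1)))
          * diagonal (fun j : Fin (n + 1) => v ^ (j : ℕ)) := by
  ext j k
  simp only [diagonal_mul, mul_diagonal, Matrix.smul_apply, Matrix.sub_apply, shiftX_apply,
    single_apply]
  rcases eq_or_ne k (Fin.last n) with rfl | hk
  · rw [Fin.last_add_one]
    by_cases hj : j = 0
    · subst hj
      simp only [if_true, and_self, Fin.val_zero, Fin.val_last, smul_eq_mul]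
      have hpow : (u * v) ^ n = 1 := by rw [huv, one_pow]
      linear_combination -u * hpow
    · simp [hj, Ne.symm hj]
  · have hval : ((k + 1 : Fin (n + 1)) : ℕ) = k + 1 := by rw [Fin.val_add_one, if_neg hk]
    by_cases hj : j = k + 1
    · simp [hj, hval, Ne.symm hk]
      linear_combination v ^ (k : ℕ) * huv
    · simp [hj, Ne.symm hk]

theorem diagonal_pow_mul_smul_shiftX_transpose :
    diagonal (fun j : Fin (n + 1) => v ^ (j : ℕ)) * (v • (shiftX (n + 1))ᵀ)
      = ((shiftX (n + 1))ᵀ - single (Fin.last n) (0 : Fin (n + 1)) (1 - v ^ (n + 1)))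
          * diagonal (fun j : Fin (n + 1) => v ^ (j : ℕ)) := by
  ext j k
  simp only [diagonal_mul, mul_diagonal, Matrix.smul_apply, Matrix.sub_apply, transpose_apply,
    shiftX_apply, single_apply]
  rcases eq_or_ne j (Fin.last n) with rfl | hj
  · rw [Fin.last_add_one]
    by_cases hk : k = 0
    · subst hk
      simp only [if_true, and_self, Fin.val_zero, Fin.val_last, smul_eq_mul]
      ring
    · simp [hk, Ne.symm hk]
  · have hval : ((j + 1 : Fin (n + 1)) : ℕ) = j + 1 := by rw [Fin.val_add_one, if_neg hj]
    by_cases hk : k = j + 1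
    · simp [hk, hval, Ne.symm hj]
      ring
    · simp [hk, Ne.symm hj]

theorem diagonal_pow_mul_periodicJacobi (d : Fin (n + 1) → ℂ) (huv : u * v = 1) :
    diagonal (fun j : Fin (n + 1) => v ^ (j : ℕ)) * periodicJacobi d u v
      = (periodicJacobi d 1 1 + single 0 (Fin.last n) (1 - u ^ (n + 1))
          + single (Fin.last n) 0 (1 - v ^ (n + 1)))
        * diagonal (fun j : Fin (n + 1) => v ^ (j : ℕ)) := by
  rw [periodicJacobi, mul_sub, mul_sub, diagonal_pow_mul_smul_shiftX huv,
    diagonal_pow_mul_smul_shiftX_transpose, diagonal_mul_diagonal]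
  simp only [periodicJacobi, one_smul, add_mul, sub_mul, diagonal_mul_diagonal, mul_comm (v ^ _)]
  abel

theorem det_periodicJacobi_eq_det_add_corners (d : Fin (n + 1) → ℂ) (huv : u * v = 1) :
    (periodicJacobi d u v).det
      = (periodicJacobi d 1 1 + single 0 (Fin.last n) (1 - u ^ (n + 1))
          + single (Fin.last n) 0 (1 - v ^ (n + 1))).det := by
  have hdet := congrArg det (diagonal_pow_mul_periodicJacobi d huv)
  rw [det_mul, det_mul, mul_comm] at hdet
  refine mul_right_cancel₀ ?_ hdet
  rw [det_diagonal]
  exact Finset.prod_ne_zero_iff.mpr fun j _ => pow_ne_zero _ (right_ne_zero_of_mul_eq_one huv)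

end Gauge

/-- Expanding along row `0` leaves an upper triangular minor with `-1` on the diagonal: the added
corner entry cancels the wrap-around entry of the last row. -/
theorem det_updateRow_periodicJacobi_add_single {n : ℕ} (d : Fin (n + 2) → ℂ) :
    (updateRow (periodicJacobi d 1 1) 0 (Pi.single (Fin.last (n + 1)) 1)
      + single (Fin.last (n + 1)) 0 1).det = 1 := by
  set G := updateRow (periodicJacobi d 1 1) 0 (Pi.single (Fin.last (n + 1)) 1)
      + single (Fin.last (n + 1)) 0 1
  set K := G.submatrix Fin.succ Fin.castSucc
  have hK : ∀ i j, K i j = (if (i : ℕ) + 1 = j then d i.succ else 0)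
      - (if i = j then 1 else 0) - (if (j : ℕ) = i + 2 then 1 else 0) := by
    intro i j
    simp only [K, G, submatrix_apply, Matrix.add_apply, updateRow_ne (Fin.succ_ne_zero i),
      periodicJacobi, Matrix.sub_apply, Matrix.smul_apply, transpose_apply, shiftX_apply,
      diagonal_apply, single_apply, Fin.ext_iff, Fin.val_add_one, Fin.val_succ, Fin.val_castSucc,
      Fin.val_last, Fin.val_zero]
    have := i.isLt
    have := j.isLt
    split_ifs <;> first | omega | simp
  have hdet : G.det = (-1) ^ (n + 1) * K.det := by
    have hrow : ∀ j, G 0 j = (Pi.single (Fin.last (n + 1)) 1 : Fin (n + 2) → ℂ) j := fun j => by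
      simp [G]
    rw [det_succ_row_zero, Fintype.sum_eq_single (Fin.last (n + 1)) fun j hj => by
      rw [hrow, Pi.single_eq_of_ne hj, mul_zero, zero_mul]]
    rw [hrow, Pi.single_eq_same, mul_one, Fin.succAbove_last, Fin.val_last]
  have hKdet : K.det = (-1) ^ (n + 1) := by
    rw [det_of_isUpperTriangular]
    · simp [hK]
    · intro i j hij
      rw [hK]
      have : (j : ℕ) < i := hij
      split_ifs <;> first | omega | simp_all
  rw [hdet, hKdet, ← pow_add, ← two_mul, pow_mul, neg_one_sq, one_pow]

/-- The determinant is affine in each corner entry. By symmetry both first-order cofactors equal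
`C = adjugate A l 0`, the mixed one is `1 - C` by `det_updateRow_periodicJacobi_add_single`, and
`pq = p + q` makes `C` cancel. -/
theorem det_periodicJacobi_add_corners {n : ℕ} (d : Fin (n + 2) → ℂ) {p q : ℂ}
    (hpq : p * q = p + q) :
    (periodicJacobi d 1 1 + single 0 (Fin.last (n + 1)) p + single (Fin.last (n + 1)) 0 q).det
      = (periodicJacobi d 1 1).det + p + q := by
  set A := periodicJacobi d 1 1
  set l := Fin.last (n + 1)
  set A' := updateRow A 0 (Pi.single l 1)
  have hsymm : adjugate A 0 l = adjugate A l 0 := by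
    rw [← transpose_apply (adjugate A), adjugate_transpose, periodicJacobi_transpose]
  have hl : l ≠ 0 := Fin.last_pos.ne'
  have hC : A'.det = adjugate A l 0 := (adjugate_apply A l 0).symm
  have hA' : A'.det + adjugate A' 0 l = 1 := by
    simpa [det_add_single] using det_updateRow_periodicJacobi_add_single d
  have hrow : updateRow (A + single l 0 q) 0 (Pi.single l 1) = A' + single l 0 q := by
    ext i j
    by_cases hi : i = 0
    · subst hi; simp [A', single_apply_of_row_ne hl]
    · simp [A', hi]
  have hcof : adjugate (A + single l 0 q) l 0 = A'.det + q * adjugate A' 0 l := by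
    rw [adjugate_apply, hrow, det_add_single]
  rw [add_right_comm, det_add_single, hcof, det_add_single, hsymm, ← hC]
  linear_combination (1 - A'.det) * hpq + (p * q) * hA'

theorem det_periodicJacobi {n : ℕ} (d : Fin (n + 2) → ℂ) {u v : ℂ} (huv : u * v = 1) :
    (periodicJacobi d u v).det = (periodicJacobi d 1 1).det + 2 - u ^ (n + 2) - v ^ (n + 2) := by
  have hpow : (u * v) ^ (n + 2) = 1 := by rw [huv, one_pow]
  rw [det_periodicJacobi_eq_det_add_corners d huv,
    det_periodicJacobi_add_corners d (by linear_combination hpow)]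
  ring

theorem smul_one_sub_two_smul_harper (N : ℕ) (x : ℂ) (b ε : ℝ) :
    x • (1 : Matrix (Fin N) (Fin N) ℂ) - (2 : ℂ) • harper N 1 b ε
      = periodicJacobi (fun j => x - ε * (omegaN N ^ (j : ℕ) + starRingEnd ℂ (omegaN N ^ (j : ℕ))))
          (exp (b * I)) (exp (-b * I)) := by
  ext j k
  by_cases hjk : j = k
  · subst hjk
    simp [harper, periodicJacobi, clockZ, shiftX_conjTranspose]
    ring
  · simp [harper, periodicJacobi, clockZ, shiftX_conjTranspose, hjk]
    ring

theorem exp_mul_I_pow_add_exp_neg_mul_I_pow (N : ℕ) (b : ℝ) :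
    exp (b * I) ^ N + exp (-b * I) ^ N = 2 * (Real.cos (N * b) : ℂ) := by
  rw [← exp_nat_mul, ← exp_nat_mul]
  push_cast
  rw [Complex.cos]
  ring_nf

/-- The characteristic polynomial of `2·h(1, b, ε)` depends on `b` only through the
additive term `−2cos(Nb)`. -/
theorem harper_charpoly_b_dependence (N : ℕ) (hN : 2 ≤ N) (x : ℂ) (b ε : ℝ) :
    Matrix.det (x • (1 : Matrix (Fin N) (Fin N) ℂ) - (2 : ℂ) • harper N 1 b ε)
      = Matrix.det (x • (1 : Matrix (Fin N) (Fin N) ℂ) - (2 : ℂ) • harper N 1 0 ε)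
          + 2 - 2 * (Real.cos ((N : ℝ) * b) : ℂ) := by
  obtain ⟨n, rfl⟩ : ∃ n, N = n + 2 := ⟨N - 2, by omega⟩
  have hunit : exp (b * I) * exp (-b * I) = 1 := by rw [← exp_add]; simp
  rw [smul_one_sub_two_smul_harper, smul_one_sub_two_smul_harper, det_periodicJacobi _ hunit,
    ofReal_zero, zero_mul, neg_zero, zero_mul, exp_zero, ← exp_mul_I_pow_add_exp_neg_mul_I_pow]
  ring
end
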